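/- Let R be a reduced elliptic root system of rank l with fundamental-set Π ∪ {a} and associated maps k and g. For α ∈ Π set c(α) = 1 if g(α) = ∅, c(α) = 2 if g(α) = 2ℤ+1, and α* := c(α)α + k(α)a, and let B₊ := {α : α ∈ Π} ∪ {α* : α ∈ Π}. Then R = W_{B₊}·B₊ := {w(μ) : w ∈ W_{B₊}, μ ∈ B₊} and W_R = W_{B₊}. -/

import Mathlib

/- ## Preliminaries: extended affine root systems (Saito) -/

noncomputable section

open Set

/-- The reflection `s_v : z ↦ z - (v^∨, z) v = z - (2 (v,z)/(v,v)) v` associated to a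
bilinear form `B` and a vector `v`.  (When `B v v = 0` this is the identity, by the
`division by zero = 0` convention; reflections are only ever used at non-isotropic `v`.) -/
def srefl {V : Type*} [AddCommGroup V] [Module ℝ V]
    (B : LinearMap.BilinForm ℝ V) (v : V) : Module.End ℝ V :=
  LinearMap.id - (((2 * (B v v)⁻¹) • (B v)).smulRight v)

/-- The Weyl group `W_S` generated by the reflections in the elements of `S`
(realized as the multiplicative closure; each generator is an involution, so this
agrees with the generated group). -/
def weyl {V : Type*} [AddCommGroup V] [Module ℝ V]
    (B : LinearMap.BilinForm ℝ V) (S : Set V) : Submonoid (Module.End ℝ V) :=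
  Submonoid.closure (srefl B '' S)

/-- The orbit `W_S · α`. -/
def worbit {V : Type*} [AddCommGroup V] [Module ℝ V]
    (B : LinearMap.BilinForm ℝ V) (S : Set V) (α : V) : Set V :=
  {v | ∃ w ∈ weyl B S, w α = v}

/-- `V⁰`, the set of isotropic vectors. -/
def nullSet {V : Type*} [AddCommGroup V] [Module ℝ V]
    (B : LinearMap.BilinForm ℝ V) : Set V := {v | B v v = 0}

/-- `ℤR`, the subgroup of `V` generated by `R`. -/
def zspan {V : Type*} [AddCommGroup V] (R : Set V) : AddSubgroup V :=
  AddSubgroup.closure R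

/-- `ℤ≥0 Π`, the set of nonnegative-integer linear combinations of elements of `Π`. -/
def nnspan {V : Type*} [AddCommMonoid V] (P : Set V) : Set V :=
  (AddSubmonoid.closure P : Set V)

/-- `(R, V)` is an `n`-extended affine root system of rank `l` (K. Saito). -/
structure IsEARS {V : Type*} [AddCommGroup V] [Module ℝ V]
    (B : LinearMap.BilinForm ℝ V) (R : Set V) (l n : ℕ) : Prop where
  rank_pos : 1 ≤ l
  findim : FiniteDimensional ℝ V
  symm : ∀ u v, B u v = B v u
  posSemidef : ∀ v, 0 ≤ B v v
  dim_eq : Module.finrank ℝ V = l + n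
  null_eq : nullSet B = (LinearMap.ker B : Set V)
  dim_null : Module.finrank ℝ (LinearMap.ker B) = n
  /-- (AX1), first half -/
  root_nonisotropic : ∀ α ∈ R, B α α ≠ 0
  /-- (AX1), second half -/
  span_eq_top : Submodule.span ℝ R = ⊤
  /-- (AX2) -/
  free : Module.Free ℤ (zspan R)
  /-- (AX2) -/
  rank_eq : Module.finrank ℤ (zspan R) = l + n
  /-- (AX3): `(α^∨, β) ∈ ℤ` -/
  integral : ∀ α ∈ R, ∀ β ∈ R, ∃ m : ℤ, 2 * B α β = (m : ℝ) * B α α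
  /-- (AX4) -/
  reflect : ∀ α ∈ R, srefl B α '' R = R
  /-- (AX5) -/
  connected : ∀ S' ⊆ R, S'.Nonempty → S' ≠ R → ∃ x ∈ S', ∃ y ∈ R \ S', B x y ≠ 0

/-- `R` is reduced, i.e. `R ∩ 2R = ∅`. -/
def IsReducedRS {V : Type*} [AddCommGroup V] [Module ℝ V] (R : Set V) : Prop :=
  ∀ α ∈ R, (2 : ℤ) • α ∉ R

/-- `Π₀` is a base (with `m` elements) of the root system `R₀`:
`Π₀ ⊆ R₀`, `Π₀` consists of `m` linearly independent elements, and
`R₀ = (R₀ ∩ ℤ≥0 Π₀) ∪ (R₀ ∩ ℤ≤0 Π₀)`. -/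
def IsBaseSet {M : Type*} [AddCommGroup M] [Module ℝ M] (R₀ P₀ : Set M) (m : ℕ) : Prop :=
  P₀ ⊆ R₀ ∧ P₀.Finite ∧ P₀.ncard = m ∧
  LinearIndependent ℝ ((↑) : P₀ → M) ∧
  R₀ = (R₀ ∩ nnspan P₀) ∪ (R₀ ∩ (-(nnspan P₀)))

/-- The bilinear form induced on a quotient `V ⧸ W` by a form vanishing on `W`. -/
def quotForm {V : Type*} [AddCommGroup V] [Module ℝ V]
    (W : Submodule ℝ V) (B : LinearMap.BilinForm ℝ V)
    (h1 : ∀ w ∈ W, B w = 0) (h2 : ∀ v : V, ∀ w ∈ W, B v w = 0) :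
    LinearMap.BilinForm ℝ (V ⧸ W) :=
  Submodule.liftQ W
    { toFun := fun v => Submodule.liftQ W (B v) (fun w hw => LinearMap.mem_ker.mpr (h2 v w hw))
      map_add' := fun u v => by
        ext x
        simp
      map_smul' := fun c v => by
        ext x
        simp }
    (fun w hw => by
      simp only [LinearMap.mem_ker]
      ext x
      simp [h1 w hw])

end

/-- A fundamental-set `Π ∪ {a}` of a reduced elliptic root system `R` of rank `l`:
(FS1) `a ∈ (ℤR)⁰` and `(ℤR)⁰ = ℤa ⊕ ℤb` for some `b`;
(FS2) `|Π| = l+1`, `Π ⊆ R` and `π_a(Π)` is a base of the affine root system `π_a(R)`. -/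
def IsFundamentalSet {V : Type*} [AddCommGroup V] [Module ℝ V]
    (B : LinearMap.BilinForm ℝ V) (R : Set V) (l : ℕ) (P : Set V) (a : V) : Prop :=
  a ∈ zspan R ∧ B a a = 0 ∧
  (∃ b : V, b ∈ zspan R ∧ B b b = 0 ∧
    ((zspan R : Set V) ∩ nullSet B = {v | ∃ m n : ℤ, v = m • a + n • b}) ∧
    (∀ m n : ℤ, m • a + n • b = 0 → m = 0 ∧ n = 0)) ∧
  P ⊆ R ∧ P.Finite ∧ P.ncard = l + 1 ∧
  IsBaseSet ((Submodule.span ℝ {a}).mkQ '' R) ((Submodule.span ℝ {a}).mkQ '' P) (l + 1)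

/-- The subset `⋃_{ε=±1} ((εα + ℤ kα a) ∪ (2εα + gα·kα a))` of the plane `ℝα ⊕ ℝa`;
here `gα : Bool`, with `false` encoding `g(α) = ∅` and `true` encoding `g(α) = 2ℤ+1`. -/
def kgLine {V : Type*} [AddCommGroup V] (a α : V) (kα : ℕ) (gα : Bool) : Set V :=
  {v | ∃ ε m : ℤ, (ε = 1 ∨ ε = -1) ∧ v = ε • α + (m * kα) • a} ∪
  {v | gα = true ∧ ∃ ε m : ℤ, (ε = 1 ∨ ε = -1) ∧ Odd m ∧ v = (2 * ε) • α + (m * kα) • a}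

/-- `k : Π → ℕ` and `g : Π → {∅, 2ℤ+1}` are the maps associated to the fundamental-set
`Π ∪ {a}`, i.e. `R ∩ (ℝα ⊕ ℝa) = ⋃_{ε=±1} ((εα + ℤ k(α) a) ∪ (2εα + g(α)k(α)a))`. -/
def IsKG {V : Type*} [AddCommGroup V] [Module ℝ V]
    (R : Set V) (a : V) (P : Set V) (k : V → ℕ) (g : V → Bool) : Prop :=
  ∀ α ∈ P, 0 < k α ∧
    R ∩ (Submodule.span ℝ {α, a} : Set V) = kgLine a α (k α) (g α)

/-- `c(α) = 1` if `g(α) = ∅`, `c(α) = 2` if `g(α) = 2ℤ+1`. -/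
def cMap {V : Type*} (g : V → Bool) (α : V) : ℕ := if g α then 2 else 1

/-- `α* := c(α)·α + k(α)·a`. -/
def starMap {V : Type*} [AddCommGroup V] (a : V) (k : V → ℕ) (g : V → Bool) (α : V) : V :=
  (cMap g α : ℤ) • α + (k α : ℤ) • a

/-- `B₊ := {α, α* | α ∈ Π}`. -/
def bplus {V : Type*} [AddCommGroup V] (a : V) (P : Set V) (k : V → ℕ) (g : V → Bool) :
    Set V :=
  P ∪ (starMap a k g '' P)

/-- `B := B₊ ∪ (−B₊)`. -/
def bfull {V : Type*} [AddCommGroup V] (a : V) (P : Set V) (k : V → ℕ) (g : V → Bool) :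
    Set V :=
  bplus a P k g ∪ (-(bplus a P k g))

/-- The set `R(Π,k,g) = ⋃_{w ∈ W_Π} ⋃_{α ∈ Π} ((w(α) + ℤk(α)a) ∪ (w(2α) + g(α)k(α)a))`. -/
def kgUnion {V : Type*} [AddCommGroup V] [Module ℝ V]
    (B : LinearMap.BilinForm ℝ V) (P : Set V) (a : V) (k : V → ℕ) (g : V → Bool) :
    Set V :=
  {v | ∃ w ∈ weyl B P, ∃ α ∈ P,
    (∃ m : ℤ, v = w α + (m * k α) • a) ∨
    (g α = true ∧ ∃ m : ℤ, Odd m ∧ v = w ((2 : ℤ) • α) + (m * k α) • a)}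

/-!
Modulo the radical line `ℝa`, `Π` is a base of the affine root system `π_a(R)`. Reflecting a
root `β` in simple roots `α` with `(α, β) > 0` lowers the height of `π_a(β)` by the positive
integer `(α^∨, β)`, so `W_Π` conjugates every root into some plane `ℝα ⊕ ℝa` with `α ∈ Π`, where
`R` is described by `k(α)` and `g(α)`. In that plane `s_α s_{α*}` translates the line through
`xα` by `(2x/c(α)) k(α) a`, so all the roots of the plane are reached from `α` and `α*` by
`W_{B₊}`. Hence `R ⊆ W_{B₊}·B₊ ⊆ R`, and `W_R = W_{B₊}` because `s_{w μ} = w s_μ w⁻¹`.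
-/

section Reflection

variable {V : Type*} [AddCommGroup V] [Module ℝ V] (B : LinearMap.BilinForm ℝ V)

lemma srefl_apply (v z : V) : srefl B v z = z - (2 * (B v v)⁻¹ * B v z) • v := by
  simp [srefl, mul_comm]

lemma srefl_mul_self (v : V) : srefl B v * srefl B v = 1 := by
  ext z
  by_cases h : B v v = 0
  · simp [srefl_apply, h]
  · simp only [Module.End.mul_apply, srefl_apply, map_sub, map_smul, Module.End.one_apply]
    rw [show 2 * (B v v)⁻¹ * B v v = 2 by field_simp]
    module

variable {B}

lemma srefl_apply_of_two_mul_eq {v z : V} {m : ℝ} (hv : B v v ≠ 0)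
    (h : 2 * B v z = m * B v v) : srefl B v z = z - m • v := by
  rw [srefl_apply, show 2 * (B v v)⁻¹ * B v z = m by field_simp; linarith]

lemma srefl_apply_self {v : V} (hv : B v v ≠ 0) : srefl B v v = -v := by
  rw [srefl_apply_of_two_mul_eq (m := 2) hv (by ring)]
  module

lemma apply_srefl_srefl (hsymm : ∀ u w, B u w = B w u) (v z z' : V) :
    B (srefl B v z) (srefl B v z') = B z z' := by
  by_cases h : B v v = 0
  · simp [srefl_apply, h]
  · simp only [srefl_apply, map_sub, map_smul, LinearMap.sub_apply, LinearMap.smul_apply,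
      smul_eq_mul]
    field_simp
    rw [hsymm z v]
    ring

lemma srefl_smul_add_smul (hsymm : ∀ u w, B u w = B w u) {a v : V} (ha : B a = 0)
    (hv : B v v ≠ 0) {c : ℝ} (hc : c ≠ 0) (d x y : ℝ) :
    srefl B (c • v + d • a) (x • v + y • a) = (-x) • v + (y - 2 * x * d / c) • a := by
  have hva : B v a = 0 := by rw [hsymm, ha, LinearMap.zero_apply]
  have hcv : ∀ z, B (c • v + d • a) z = c * B v z := by simp [ha]
  have hvx : B v (x • v + y • a) = x * B v v := by simp [hva]
  have hcc : B (c • v + d • a) (c • v + d • a) = c * c * B v v := by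
    rw [hcv]
    simp [hva]
    ring
  rw [srefl_apply_of_two_mul_eq (m := 2 * x / c)
    (by rw [hcc]; exact mul_ne_zero (mul_ne_zero hc hc) hv) (by rw [hcc, hcv, hvx]; field_simp)]
  have hxc : 2 * x / c * c = 2 * x := div_mul_cancel₀ _ hc
  rw [smul_add, smul_smul, smul_smul, hxc]
  module

end Reflection

section Weyl

variable {V : Type*} [AddCommGroup V] [Module ℝ V] {B : LinearMap.BilinForm ℝ V} {S R : Set V}
  {w : Module.End ℝ V}

lemma weyl_mono {T : Set V} (h : S ⊆ T) : weyl B S ≤ weyl B T :=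
  Submonoid.closure_mono (Set.image_mono h)

lemma srefl_mem_weyl {v : V} (hv : v ∈ S) : srefl B v ∈ weyl B S :=
  Submonoid.subset_closure (Set.mem_image_of_mem _ hv)

lemma exists_inverse_of_mem_weyl (hw : w ∈ weyl B S) :
    ∃ w' ∈ weyl B S, w' * w = 1 ∧ w * w' = 1 := by
  induction hw using Submonoid.closure_induction with
  | mem x hx =>
    obtain ⟨v, hv, rfl⟩ := hx
    exact ⟨srefl B v, srefl_mem_weyl hv, srefl_mul_self B v, srefl_mul_self B v⟩
  | one => exact ⟨1, one_mem _, one_mul 1, one_mul 1⟩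
  | mul x y _ _ ihx ihy =>
    obtain ⟨x', hx', hx'x, hxx'⟩ := ihx
    obtain ⟨y', hy', hy'y, hyy'⟩ := ihy
    refine ⟨y' * x', mul_mem hy' hx', ?_, ?_⟩
    · rw [mul_assoc, ← mul_assoc x', hx'x, one_mul, hy'y]
    · rw [mul_assoc, ← mul_assoc y, hyy', one_mul, hxx']

lemma apply_weyl_weyl (hsymm : ∀ u v, B u v = B v u) (hw : w ∈ weyl B S) (z z' : V) :
    B (w z) (w z') = B z z' := by
  induction hw using Submonoid.closure_induction generalizing z z' with
  | mem x hx =>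
    obtain ⟨v, -, rfl⟩ := hx
    exact apply_srefl_srefl hsymm v z z'
  | one => rfl
  | mul x y _ _ ihx ihy => exact (ihx _ _).trans (ihy _ _)

lemma weyl_mapsTo (hSR : S ⊆ R) (hrefl : ∀ α ∈ R, srefl B α '' R = R) (hw : w ∈ weyl B S) :
    Set.MapsTo w R R := by
  induction hw using Submonoid.closure_induction with
  | mem x hx =>
    obtain ⟨v, hv, rfl⟩ := hx
    intro β hβ
    rw [← hrefl v (hSR hv)]
    exact Set.mem_image_of_mem _ hβ
  | one => exact Set.mapsTo_id R
  | mul x y _ _ ihx ihy => exact ihx.comp ihy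

lemma srefl_weyl_apply (hsymm : ∀ u v, B u v = B v u) (hw : w ∈ weyl B S)
    {w' : Module.End ℝ V} (hww' : w * w' = 1) (μ : V) :
    srefl B (w μ) = w * srefl B μ * w' := by
  ext z
  have hz : w (w' z) = z := by simpa using LinearMap.congr_fun hww' z
  have hμz : B (w μ) z = B μ (w' z) := by
    conv_lhs => rw [← hz]
    exact apply_weyl_weyl hsymm hw μ (w' z)
  simp only [Module.End.mul_apply, srefl_apply, map_sub, map_smul, apply_weyl_weyl hsymm hw,
    hμz, hz]

variable (B S) in
def weylOrbit : Set V := {v | ∃ w ∈ weyl B S, ∃ μ ∈ S, w μ = v}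

lemma subset_weylOrbit : S ⊆ weylOrbit B S :=
  fun μ hμ => ⟨1, one_mem _, μ, hμ, rfl⟩

lemma weyl_apply_mem_weylOrbit (hw : w ∈ weyl B S) {v : V} (hv : v ∈ weylOrbit B S) :
    w v ∈ weylOrbit B S := by
  obtain ⟨u, hu, μ, hμ, rfl⟩ := hv
  exact ⟨w * u, mul_mem hw hu, μ, hμ, rfl⟩

lemma mem_weylOrbit_of_weyl_apply (hw : w ∈ weyl B S) {v : V} (hv : w v ∈ weylOrbit B S) :
    v ∈ weylOrbit B S := by
  obtain ⟨w', hw', hw'w, -⟩ := exists_inverse_of_mem_weyl hw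
  simpa [← Module.End.mul_apply, hw'w] using weyl_apply_mem_weylOrbit hw' hv

lemma weylOrbit_subset (hSR : S ⊆ R) (hrefl : ∀ α ∈ R, srefl B α '' R = R) :
    weylOrbit B S ⊆ R := by
  rintro _ ⟨w, hw, μ, hμ, rfl⟩
  exact weyl_mapsTo hSR hrefl hw (hSR hμ)

lemma weyl_eq_of_subset_weylOrbit (hsymm : ∀ u v, B u v = B v u) (hSR : S ⊆ R)
    (hRS : R ⊆ weylOrbit B S) : weyl B R = weyl B S := by
  refine le_antisymm (Submonoid.closure_le.mpr ?_) (weyl_mono hSR)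
  rintro _ ⟨β, hβ, rfl⟩
  obtain ⟨w, hw, μ, hμ, rfl⟩ := hRS hβ
  obtain ⟨w', hw', -, hww'⟩ := exists_inverse_of_mem_weyl hw
  rw [srefl_weyl_apply hsymm hw hww' μ]
  exact mul_mem (mul_mem hw (srefl_mem_weyl hμ)) hw'

end Weyl

section Plane

variable {V : Type*} [AddCommGroup V] [Module ℝ V] {B : LinearMap.BilinForm ℝ V} {S : Set V}
  {a α : V}

lemma neg_smul_add_smul_mem_weylOrbit_iff (hsymm : ∀ u v, B u v = B v u) (ha : B a = 0)
    (hα : B α α ≠ 0) (hαS : α ∈ S) (x y : ℝ) :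
    (-x) • α + y • a ∈ weylOrbit B S ↔ x • α + y • a ∈ weylOrbit B S := by
  have hflip : ∀ x : ℝ, x • α + y • a ∈ weylOrbit B S → (-x) • α + y • a ∈ weylOrbit B S := by
    intro x h
    have hr : srefl B α (x • α + y • a) = (-x) • α + y • a := by
      simpa using srefl_smul_add_smul hsymm ha hα one_ne_zero 0 x y
    exact hr ▸ weyl_apply_mem_weylOrbit (srefl_mem_weyl hαS) h
  exact ⟨fun h => by simpa using hflip (-x) h, hflip x⟩

/-- The product of the reflections in `α` and in `c • α + d • a` is a translation along `a`. -/
lemma periodic_smul_add_smul_mem_weylOrbit (hsymm : ∀ u v, B u v = B v u) (ha : B a = 0)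
    (hα : B α α ≠ 0) (hαS : α ∈ S) {c d : ℝ} (hc : c ≠ 0) (hS : c • α + d • a ∈ S) (x : ℝ) :
    Function.Periodic (fun y : ℝ => x • α + y • a ∈ weylOrbit B S) (2 * x * d / c) := by
  intro y
  have hr : ∀ x y, srefl B (c • α + d • a) (x • α + y • a) = (-x) • α + (y - 2 * x * d / c) • a :=
    srefl_smul_add_smul hsymm ha hα hc d
  have hrO : ∀ {v}, v ∈ weylOrbit B S → srefl B (c • α + d • a) v ∈ weylOrbit B S :=
    weyl_apply_mem_weylOrbit (srefl_mem_weyl hS)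
  refine propext ⟨fun h => ?_, fun h => ?_⟩
  · have := hrO h
    rwa [hr, add_sub_cancel_right, neg_smul_add_smul_mem_weylOrbit_iff hsymm ha hα hαS] at this
  · have := hrO ((neg_smul_add_smul_mem_weylOrbit_iff hsymm ha hα hαS x y).mpr h)
    rwa [hr, neg_neg, show y - 2 * -x * d / c = y + 2 * x * d / c by ring] at this

lemma starMap_eq (a α : V) (k : V → ℕ) (g : V → Bool) :
    starMap a k g α = (cMap g α : ℝ) • α + (k α : ℝ) • a := by
  simp [starMap, Nat.cast_smul_eq_nsmul]

lemma kgLine_subset_weylOrbit (hsymm : ∀ u v, B u v = B v u) (ha : B a = 0)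
    (hα : B α α ≠ 0) {k : V → ℕ} {g : V → Bool} (hαS : α ∈ S) (hstar : starMap a k g α ∈ S) :
    kgLine a α (k α) (g α) ⊆ weylOrbit B S := by
  have hflip := neg_smul_add_smul_mem_weylOrbit_iff hsymm ha hα hαS
  have hsign : ∀ ε : ℤ, (ε = 1 ∨ ε = -1) → ∀ x y : ℝ,
      x • α + y • a ∈ weylOrbit B S → (ε * x) • α + y • a ∈ weylOrbit B S := by
    rintro ε (rfl | rfl) x y h
    · rwa [Int.cast_one, one_mul]
    · rwa [Int.cast_neg, Int.cast_one, neg_one_mul, hflip]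
  have htrans : ∀ {c d : ℝ}, c ≠ 0 → c • α + d • a ∈ S → ∀ x y, x • α + y • a ∈ weylOrbit B S →
      ∀ n : ℤ, x • α + (y + n * (2 * x * d / c)) • a ∈ weylOrbit B S :=
    fun hc hS x y h n =>
      Eq.mpr ((periodic_smul_add_smul_mem_weylOrbit hsymm ha hα hαS hc hS x).int_mul n y) h
  have hα' : (1 : ℝ) • α + (0 : ℝ) • a ∈ weylOrbit B S := by simpa using subset_weylOrbit hαS
  rw [starMap_eq] at hstar
  have hstar' : _ ∈ weylOrbit B S := subset_weylOrbit hstar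
  rintro v (⟨ε, m, hε, rfl⟩ | ⟨hg, ε, m, hε, ⟨n, rfl⟩, rfl⟩)
  · rw [← Int.cast_smul_eq_zsmul ℝ, ← Int.cast_smul_eq_zsmul ℝ, ← mul_one (ε : ℝ)]
    refine hsign ε hε _ _ ?_
    cases hg : g α
    · simp only [cMap, hg, Bool.false_eq_true, if_false, Nat.cast_one] at hstar hstar'
      obtain ⟨n, rfl | rfl⟩ := Int.even_or_odd' m
      · convert htrans one_ne_zero hstar 1 0 hα' n using 3
        push_cast
        ring
      · convert htrans one_ne_zero hstar 1 (k α) hstar' n using 3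
        push_cast
        ring
    · simp only [cMap, hg, if_true, Nat.cast_ofNat] at hstar
      convert htrans two_ne_zero hstar 1 0 hα' m using 3
      push_cast
      ring
  · simp only [cMap, hg, if_true, Nat.cast_ofNat] at hstar hstar'
    rw [← Int.cast_smul_eq_zsmul ℝ, ← Int.cast_smul_eq_zsmul ℝ, Int.cast_mul, Int.cast_ofNat,
      mul_comm (2 : ℝ)]
    refine hsign ε hε _ _ ?_
    convert htrans two_ne_zero hstar 2 (k α) hstar' n using 3
    push_cast
    ring

end Plane

lemma one_le_intCast_of_mul_pos {p : ℝ} {m : ℤ} (hp : 0 < p) (hmp : 0 < m * p) :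
    (1 : ℝ) ≤ m := by
  have : (0 : ℤ) < m := Int.cast_pos.mp (pos_of_mul_pos_left hmp hp.le)
  exact_mod_cast (by omega : (1 : ℤ) ≤ m)

section Coordinates

variable {M : Type*} [AddCommGroup M] [Module ℝ M]

lemma exists_nonneg_linearCombination_of_mem_closure {s : Set M} [Fintype s] {z : M}
    (hz : z ∈ AddSubmonoid.closure s) :
    ∃ x : s → ℝ, 0 ≤ x ∧ z = Fintype.linearCombination ℝ Subtype.val x := by
  obtain ⟨n, rfl⟩ := AddSubmonoid.mem_closure_iff_of_fintype.mp hz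
  refine ⟨fun i => n i, fun i => Nat.cast_nonneg _, ?_⟩
  simp [Fintype.linearCombination_apply, Nat.cast_smul_eq_nsmul]

lemma exists_pos_of_apply_linearCombination_pos {ι : Type*} [Fintype ι] {e : ι → M}
    (f : M →ₗ[ℝ] ℝ) {x : ι → ℝ} (hx : 0 ≤ x) (h : 0 < f (Fintype.linearCombination ℝ e x)) :
    ∃ i, 0 < f (e i) := by
  by_contra! hneg
  rw [Fintype.linearCombination_apply, map_sum] at h
  refine h.not_ge (Finset.sum_nonpos fun i _ => ?_)
  rw [map_smul, smul_eq_mul]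
  exact mul_nonpos_of_nonneg_of_nonpos (hx i) (hneg i)

lemma eq_single_of_add_eq_single {ι : Type*} [DecidableEq ι] {x y : ι → ℝ} (hx : 0 ≤ x)
    (hy : 0 ≤ y) {j : ι} {m : ℝ} (h : x + y = Pi.single j m) : x = Pi.single j (x j) := by
  funext i
  by_cases hij : i = j
  · subst hij
    simp
  · have hi := congrFun h i
    simp only [Pi.add_apply, Pi.single_apply, hij, if_false] at hi ⊢
    linarith [show 0 ≤ x i from hx i, show 0 ≤ y i from hy i]

end Coordinates

section Conjugation

variable {V : Type*} [AddCommGroup V] [Module ℝ V] {B : LinearMap.BilinForm ℝ V} {R P : Set V}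
  {K : Submodule ℝ V}

lemma quotForm_mkQ (h1 : ∀ w ∈ K, B w = 0) (h2 : ∀ v : V, ∀ w ∈ K, B v w = 0) (x y : V) :
    quotForm K B h1 h2 (K.mkQ x) (K.mkQ y) = B x y :=
  rfl

lemma mem_span_singleton_sup_of_mkQ_eq_smul {α β : V} {t : ℝ} (h : K.mkQ β = t • K.mkQ α) :
    β ∈ Submodule.span ℝ {α} ⊔ K := by
  rw [← map_smul, ← sub_eq_zero, ← map_sub, Submodule.mkQ_apply,
    Submodule.Quotient.mk_eq_zero] at h
  exact Submodule.mem_sup.mpr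
    ⟨t • α, Submodule.smul_mem _ _ (Submodule.mem_span_singleton_self α), _, h, by abel⟩

lemma neg_mem_of_srefl_image_eq (hrefl : ∀ α ∈ R, srefl B α '' R = R) {β : V} (hβ : β ∈ R)
    (hββ : B β β ≠ 0) : -β ∈ R := by
  rw [← srefl_apply_self hββ, ← hrefl β hβ]
  exact Set.mem_image_of_mem _ hβ

lemma exists_mem_pos_apply_of_mkQ_eq (hsymm : ∀ u v, B u v = B v u) (hK : ∀ w ∈ K, B w = 0)
    [Fintype (K.mkQ '' P)] {β : V} (hβ : 0 < B β β) {x : K.mkQ '' P → ℝ} (hx : 0 ≤ x)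
    (hβx : K.mkQ β = Fintype.linearCombination ℝ Subtype.val x) : ∃ α ∈ P, 0 < B α β := by
  have h2 : ∀ v, ∀ w ∈ K, B v w = 0 := fun v w hw => by
    rw [hsymm, hK w hw, LinearMap.zero_apply]
  obtain ⟨⟨_, α, hαP, rfl⟩, hα⟩ := exists_pos_of_apply_linearCombination_pos (e := Subtype.val)
    (quotForm K B hK h2 (K.mkQ β)) hx (by rw [← hβx, quotForm_mkQ]; exact hβ)
  rw [quotForm_mkQ, hsymm] at hα
  exact ⟨α, hαP, hα⟩

lemma exists_weyl_apply_mem_span_singleton_sup_of_sum_lt (hsymm : ∀ u v, B u v = B v u)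
    (hK : ∀ w ∈ K, B w = 0) (hpos : ∀ β ∈ R, 0 < B β β)
    (hint : ∀ α ∈ R, ∀ β ∈ R, ∃ m : ℤ, 2 * B α β = m * B α α)
    (hrefl : ∀ α ∈ R, srefl B α '' R = R) (hPR : P ⊆ R) [Fintype (K.mkQ '' P)]
    (hli : LinearIndependent ℝ ((↑) : K.mkQ '' P → V ⧸ K))
    (hsign : ∀ β ∈ R, K.mkQ β ∈ nnspan (K.mkQ '' P) ∨ -K.mkQ β ∈ nnspan (K.mkQ '' P))
    (n : ℕ) : ∀ β ∈ R, ∀ x : K.mkQ '' P → ℝ, 0 ≤ x →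
      K.mkQ β = Fintype.linearCombination ℝ Subtype.val x → ∑ i, x i < n →
      ∃ w ∈ weyl B P, ∃ α ∈ P, w β ∈ Submodule.span ℝ {α} ⊔ K := by
  classical
  induction n with
  | zero =>
    intro β _ x hx _ hxn
    rw [Nat.cast_zero] at hxn
    exact absurd hxn (not_lt.mpr (Finset.sum_nonneg fun i _ => hx i))
  | succ n ih =>
    intro β hβ x hx hβx hxn
    obtain ⟨α, hαP, hαβ⟩ := exists_mem_pos_apply_of_mkQ_eq hsymm hK (hpos β hβ) hx hβx
    set j : K.mkQ '' P := ⟨K.mkQ α, Set.mem_image_of_mem _ hαP⟩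
    obtain ⟨m, hm⟩ := hint α (hPR hαP) β hβ
    have hm1 : (1 : ℝ) ≤ m := one_le_intCast_of_mul_pos (hpos α (hPR hαP)) (by linarith)
    have hβ' : srefl B α β = β - (m : ℝ) • α :=
      srefl_apply_of_two_mul_eq (hpos α (hPR hαP)).ne' hm
    have hβ'R : srefl B α β ∈ R := hrefl α (hPR hαP) ▸ Set.mem_image_of_mem _ hβ
    have hβ'x : K.mkQ (srefl B α β) =
        Fintype.linearCombination ℝ Subtype.val (x - Pi.single j (m : ℝ)) := by
      rw [hβ', map_sub, map_smul, hβx, map_sub, Fintype.linearCombination_apply_single]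
    have hinj := hli.fintypeLinearCombination_injective
    rcases hsign _ hβ'R with hup | hdown
    · obtain ⟨x', hx', hx'eq⟩ := exists_nonneg_linearCombination_of_mem_closure hup
      obtain rfl : x' = x - Pi.single j (m : ℝ) := hinj (hx'eq.symm.trans hβ'x)
      obtain ⟨w, hw, α', hα'P, hwβ'⟩ := ih _ hβ'R _ hx' hx'eq (by
        simp only [Pi.sub_apply, Finset.sum_sub_distrib, Finset.sum_pi_single', Finset.mem_univ,
          if_true]
        push_cast at hxn
        linarith)
      exact ⟨w * srefl B α, mul_mem hw (srefl_mem_weyl hαP), α', hα'P, hwβ'⟩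
    · -- the coordinates of `β` and of `-s_α β` are nonnegative and add up to `m • e_α`
      obtain ⟨y, hy, hyeq⟩ := exists_nonneg_linearCombination_of_mem_closure hdown
      have hxy : x + y = Pi.single j (m : ℝ) := hinj (by
        rw [map_add, ← hyeq, hβ'x, map_sub]
        abel)
      refine ⟨1, one_mem _, α, hαP, mem_span_singleton_sup_of_mkQ_eq_smul (t := x j) ?_⟩
      rw [Module.End.one_apply, hβx, eq_single_of_add_eq_single hx hy hxy,
        Fintype.linearCombination_apply_single, Pi.single_eq_same]

theorem exists_weyl_apply_mem_span_singleton_sup (hsymm : ∀ u v, B u v = B v u)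
    (hK : ∀ w ∈ K, B w = 0) (hpos : ∀ β ∈ R, 0 < B β β)
    (hint : ∀ α ∈ R, ∀ β ∈ R, ∃ m : ℤ, 2 * B α β = m * B α α)
    (hrefl : ∀ α ∈ R, srefl B α '' R = R) (hPR : P ⊆ R) {n : ℕ}
    (hbase : IsBaseSet (K.mkQ '' R) (K.mkQ '' P) n) {β : V} (hβ : β ∈ R) :
    ∃ w ∈ weyl B P, ∃ α ∈ P, w β ∈ Submodule.span ℝ {α} ⊔ K := by
  obtain ⟨-, hfin, -, hli, hdecomp⟩ := hbase
  have := hfin.fintype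
  have hsign : ∀ β ∈ R, K.mkQ β ∈ nnspan (K.mkQ '' P) ∨ -K.mkQ β ∈ nnspan (K.mkQ '' P) := by
    intro β hβ
    have hβK := Set.mem_image_of_mem K.mkQ hβ
    rw [hdecomp] at hβK
    exact hβK.imp And.right And.right
  have hup : ∀ β ∈ R, K.mkQ β ∈ nnspan (K.mkQ '' P) →
      ∃ w ∈ weyl B P, ∃ α ∈ P, w β ∈ Submodule.span ℝ {α} ⊔ K := by
    intro β hβ hβP
    obtain ⟨x, hx, hβx⟩ := exists_nonneg_linearCombination_of_mem_closure hβP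
    obtain ⟨n, hn⟩ := exists_nat_gt (∑ i, x i)
    exact exists_weyl_apply_mem_span_singleton_sup_of_sum_lt hsymm hK hpos hint hrefl hPR hli
      hsign n β hβ x hx hβx hn
  rcases hsign β hβ with hβP | hβP
  · exact hup β hβ hβP
  · obtain ⟨w, hw, α, hαP, hwβ⟩ :=
      hup (-β) (neg_mem_of_srefl_image_eq hrefl hβ (hpos β hβ).ne') (by rwa [map_neg])
    refine ⟨w, hw, α, hαP, ?_⟩
    simpa using Submodule.neg_mem _ hwβ

end Conjugation

lemma starMap_mem_kgLine {V : Type*} [AddCommGroup V] (a α : V) (k : V → ℕ) (g : V → Bool) :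
    starMap a k g α ∈ kgLine a α (k α) (g α) := by
  cases hg : g α
  · exact Or.inl ⟨1, 1, Or.inl rfl, by simp [starMap, cMap, hg]⟩
  · exact Or.inr ⟨rfl, 1, 1, Or.inl rfl, odd_one, by simp [starMap, cMap, hg]⟩

theorem stmt10_general {V : Type*} [AddCommGroup V] [Module ℝ V]
    (B : LinearMap.BilinForm ℝ V) (R : Set V) (l : ℕ)
    (hE : IsEARS B R l 2)
    (P : Set V) (a : V) (hfs : IsFundamentalSet B R l P a)
    (k : V → ℕ) (g : V → Bool) (hkg : IsKG R a P k g) :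
    R = {v | ∃ w ∈ weyl B (bplus a P k g), ∃ μ ∈ bplus a P k g, w μ = v} ∧
    weyl B R = weyl B (bplus a P k g) := by
  obtain ⟨-, haa, -, hPR, -, -, hbase⟩ := hfs
  have ha : B a = 0 := by
    have : a ∈ nullSet B := haa
    rwa [hE.null_eq, SetLike.mem_coe, LinearMap.mem_ker] at this
  have hpos : ∀ β ∈ R, 0 < B β β := fun β hβ =>
    (hE.posSemidef β).lt_of_ne' (hE.root_nonisotropic β hβ)
  have hBR : bplus a P k g ⊆ R := by
    rintro _ (hα | ⟨α, hαP, rfl⟩)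
    · exact hPR hα
    · have h := starMap_mem_kgLine a α k g
      rw [← (hkg α hαP).2] at h
      exact h.1
  have hRO : R ⊆ weylOrbit B (bplus a P k g) := by
    intro β hβ
    obtain ⟨w, hw, α, hαP, hwβ⟩ := exists_weyl_apply_mem_span_singleton_sup hE.symm
      (fun w hw => by obtain ⟨t, rfl⟩ := Submodule.mem_span_singleton.mp hw; simp [ha])
      hpos hE.integral hE.reflect hPR hbase hβ
    have hline : w β ∈ kgLine a α (k α) (g α) := by
      rw [← (hkg α hαP).2, Submodule.span_insert]
      exact ⟨weyl_mapsTo hPR hE.reflect hw hβ, hwβ⟩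
    exact mem_weylOrbit_of_weyl_apply (weyl_mono Set.subset_union_left hw)
      (kgLine_subset_weylOrbit hE.symm ha (hpos α (hPR hαP)).ne' (Or.inl hαP)
        (Or.inr ⟨α, hαP, rfl⟩) hline)
  exact ⟨hRO.antisymm (weylOrbit_subset hBR hE.reflect),
    weyl_eq_of_subset_weylOrbit hE.symm hBR hRO⟩

/-- `R = W_{B₊} · B₊` and `W_R = W_{B₊}`, where
`B₊ = {α, α* | α ∈ Π}` and `α* = c(α)α + k(α)a`. -/
theorem stmt10 {V : Type*} [AddCommGroup V] [Module ℝ V]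
    (B : LinearMap.BilinForm ℝ V) (R : Set V) (l : ℕ)
    (hE : IsEARS B R l 2) (hred : IsReducedRS R)
    (P : Set V) (a : V) (hfs : IsFundamentalSet B R l P a)
    (k : V → ℕ) (g : V → Bool) (hkg : IsKG R a P k g) :
    R = {v | ∃ w ∈ weyl B (bplus a P k g), ∃ μ ∈ bplus a P k g, w μ = v} ∧
    weyl B R = weyl B (bplus a P k g) :=
  stmt10_general B R l hE P a hfs k g hkg
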